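/- arXiv:1309.1680 — 4 statements merged into one kernel-verified Lean document; each statement's English description precedes it below -/
import Mathlib

section
/- Let $\mathbb{F}$ be a field and $i, j, k \in \mathbb{F}^\times$ pairwise distinct with $1+ij \neq 0$ and $i + j \neq 0$. Let $\Gamma_{ij} = \begin{pmatrix} \frac{ij(i+j)}{1+ij} & \frac{ij}{1+ij} \\ \frac{(1-i^2)(j^2-1)}{1+ij} & \frac{i+j}{1+ij}\end{pmatrix}$ and $\Gamma_k = \begin{pmatrix} k & 1 \\ 0 & k^{-1}\end{pmatrix}$. Then $\det(\Gamma_{ij} - \Gamma_k) = \frac{(i+j)(k-i)(j-k)}{k(1+ij)}$, which is nonzero. -/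
theorem Matrix.det_fin_two_of_sub_of {R : Type*} [CommRing R] (a b c d a' b' c' d' : R) :
    Matrix.det (!![a, b; c, d] - !![a', b'; c', d']) = (a - a') * (d - d') - (b - b') * (c - c') := by
  simp [Matrix.det_fin_two]

theorem det_gamma_ij_sub_gamma_k_general (F : Type*) [Field F]
    (i j k : F) (hk : k ≠ 0)
    (hik : i ≠ k) (hjk : j ≠ k)
    (h1 : 1 + i * j ≠ 0) (h2 : i + j ≠ 0) :
    Matrix.det (!![i * j * (i + j) / (1 + i * j), i * j / (1 + i * j);
                   (1 - i ^ 2) * (j ^ 2 - 1) / (1 + i * j), (i + j) / (1 + i * j)] -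
                !![k, 1; 0, k⁻¹]) = (i + j) * (k - i) * (j - k) / (k * (1 + i * j)) ∧
    (i + j) * (k - i) * (j - k) / (k * (1 + i * j)) ≠ 0 := by
  refine ⟨?_, ?_⟩
  · rw [Matrix.det_fin_two_of_sub_of]
    field_simp
    ring
  · have hki : k - i ≠ 0 := sub_ne_zero.mpr hik.symm
    have hjk' : j - k ≠ 0 := sub_ne_zero.mpr hjk
    exact div_ne_zero (mul_ne_zero (mul_ne_zero h2 hki) hjk') (mul_ne_zero hk h1)

theorem det_gamma_ij_sub_gamma_k (F : Type*) [Field F]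
    (i j k : F) (hi : i ≠ 0) (hj : j ≠ 0) (hk : k ≠ 0)
    (hij : i ≠ j) (hik : i ≠ k) (hjk : j ≠ k)
    (h1 : 1 + i * j ≠ 0) (h2 : i + j ≠ 0) :
    Matrix.det (!![i * j * (i + j) / (1 + i * j), i * j / (1 + i * j);
                   (1 - i ^ 2) * (j ^ 2 - 1) / (1 + i * j), (i + j) / (1 + i * j)] -
                !![k, 1; 0, k⁻¹]) = (i + j) * (k - i) * (j - k) / (k * (1 + i * j)) ∧
    (i + j) * (k - i) * (j - k) / (k * (1 + i * j)) ≠ 0 :=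
  det_gamma_ij_sub_gamma_k_general F i j k hk hik hjk h1 h2
end

section
/- Let $\mathbb{F}$ be a field and $i, j, k, l \in \mathbb{F}^\times$ pairwise distinct with $1+ij \neq 0$ and $1+kl \neq 0$. With $\Gamma_{ij}$ and $\Gamma_{kl}$ defined by $\Gamma_{ij} = \begin{pmatrix} \frac{ij(i+j)}{1+ij} & \frac{ij}{1+ij} \\ \frac{(1-i^2)(j^2-1)}{1+ij} & \frac{i+j}{1+ij}\end{pmatrix}$, one has $\det(\Gamma_{ij} - \Gamma_{kl}) = \frac{(i-k)(j-k)(i-l)(j-l)}{(1+ij)(1+kl)}$, which is nonzero. -/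
section

open Matrix

variable {F : Type*} [Field F]

def gammaMatrix (i j : F) : Matrix (Fin 2) (Fin 2) F :=
  !![i * j * (i + j) / (1 + i * j), i * j / (1 + i * j);
     (1 - i ^ 2) * (j ^ 2 - 1) / (1 + i * j), (i + j) / (1 + i * j)]

theorem det_gammaMatrix_sub_gammaMatrix {i j k l : F}
    (hij : 1 + i * j ≠ 0) (hkl : 1 + k * l ≠ 0) :
    (gammaMatrix i j - gammaMatrix k l).det =
      (i - k) * (j - k) * (i - l) * (j - l) / ((1 + i * j) * (1 + k * l)) := by
  rw [det_fin_two]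
  simp only [gammaMatrix, Matrix.sub_apply, of_apply, cons_val', cons_val_zero, cons_val_one,
    empty_val', cons_val_fin_one]
  field_simp
  ring

end

theorem det_gamma_ij_sub_gamma_kl_general (F : Type*) [Field F]
    (i j k l : F)
    (hik : i ≠ k) (hil : i ≠ l) (hjk : j ≠ k) (hjl : j ≠ l)
    (h1 : 1 + i * j ≠ 0) (h2 : 1 + k * l ≠ 0) :
    Matrix.det (!![i * j * (i + j) / (1 + i * j), i * j / (1 + i * j);
                   (1 - i ^ 2) * (j ^ 2 - 1) / (1 + i * j), (i + j) / (1 + i * j)] -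
                !![k * l * (k + l) / (1 + k * l), k * l / (1 + k * l);
                   (1 - k ^ 2) * (l ^ 2 - 1) / (1 + k * l), (k + l) / (1 + k * l)]) =
      (i - k) * (j - k) * (i - l) * (j - l) / ((1 + i * j) * (1 + k * l)) ∧
    (i - k) * (j - k) * (i - l) * (j - l) / ((1 + i * j) * (1 + k * l)) ≠ 0 :=
  ⟨det_gammaMatrix_sub_gammaMatrix h1 h2,
    div_ne_zero (by simp [sub_ne_zero, *]) (mul_ne_zero h1 h2)⟩

theorem det_gamma_ij_sub_gamma_kl (F : Type*) [Field F]
    (i j k l : F) (hi : i ≠ 0) (hj : j ≠ 0) (hk : k ≠ 0) (hl : l ≠ 0)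
    (hij : i ≠ j) (hik : i ≠ k) (hil : i ≠ l) (hjk : j ≠ k) (hjl : j ≠ l) (hkl : k ≠ l)
    (h1 : 1 + i * j ≠ 0) (h2 : 1 + k * l ≠ 0) :
    Matrix.det (!![i * j * (i + j) / (1 + i * j), i * j / (1 + i * j);
                   (1 - i ^ 2) * (j ^ 2 - 1) / (1 + i * j), (i + j) / (1 + i * j)] -
                !![k * l * (k + l) / (1 + k * l), k * l / (1 + k * l);
                   (1 - k ^ 2) * (l ^ 2 - 1) / (1 + k * l), (k + l) / (1 + k * l)]) =
      (i - k) * (j - k) * (i - l) * (j - l) / ((1 + i * j) * (1 + k * l)) ∧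
    (i - k) * (j - k) * (i - l) * (j - l) / ((1 + i * j) * (1 + k * l)) ≠ 0 :=
  det_gamma_ij_sub_gamma_kl_general F i j k l hik hil hjk hjl h1 h2
end

section
/- Let $q$ be even (a power of 2) and $\mathbb{F}$ the field of order $q$. There exists a subset $S \subseteq \mathbb{F}^\times$ with $|S| = q/2$ such that for all distinct $i, j \in S$, $ij \neq 1$ (note that in characteristic 2, the conditions $i+j \neq 0$ and $ij \neq -1$ reduce to $ij \neq 1$ and $i \neq j$). -/
/-!
The unit group of `F` has odd order `q - 1`, so `1` is the only unit equal to its own inverse and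
the other `q - 2` units fall into pairs `{u, u⁻¹}`. Ordering the units arbitrarily and keeping each
`u` with `u ≤ u⁻¹` selects `1` and one element of every pair: `q / 2` units, no two of which
multiply to `1`.
-/

open Finset

section OddOrder

variable {G : Type*} [Group G] [Fintype G]

theorem eq_one_of_inv_eq_self_of_odd_card (hG : Odd (Fintype.card G)) {g : G} (hg : g⁻¹ = g) :
    g = 1 := by
  have hsq : g ^ 2 = 1 := by rw [sq, ← inv_mul_cancel g, hg]
  have hcop : Nat.Coprime 2 (Fintype.card G) := Nat.coprime_two_left.mpr hG
  exact orderOf_eq_one_iff.mp <| Nat.eq_one_of_dvd_one <|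
    hcop ▸ Nat.dvd_gcd (orderOf_dvd_of_pow_eq_one hsq) orderOf_dvd_card

omit [Fintype G] in
theorem eq_of_mul_eq_one_of_le_inv [LinearOrder G] {u v : G} (hu : u ≤ u⁻¹) (hv : v ≤ v⁻¹)
    (huv : u * v = 1) : u = v := by
  obtain rfl := eq_inv_of_mul_eq_one_right huv
  exact le_antisymm hu (by simpa using hv)

theorem two_mul_card_filter_le_inv [LinearOrder G] [DecidableEq G]
    (hG : Odd (Fintype.card G)) :
    2 * #{g : G | g ≤ g⁻¹} = Fintype.card G + 1 := by
  have hsplit : #{g : G | g ≤ g⁻¹} + #{g : G | ¬ g ≤ g⁻¹} = Fintype.card G :=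
    card_filter_add_card_filter_not _
  have hswap : #{g : G | ¬ g ≤ g⁻¹} = #{g : G | g < g⁻¹} := by
    refine card_nbij' (·⁻¹) (·⁻¹) ?_ ?_ (fun _ _ => inv_inv _) (fun _ _ => inv_inv _) <;>
      intro g <;> simp
  have herase : ({g : G | g < g⁻¹} : Finset G) = ({g : G | g ≤ g⁻¹} : Finset G).erase 1 := by
    ext g
    simp only [mem_filter, mem_univ, true_and, mem_erase, lt_iff_le_and_ne]
    refine ⟨fun ⟨hle, hne⟩ => ⟨fun h => hne (by simp [h]), hle⟩, fun ⟨h1, hle⟩ => ⟨hle, ?_⟩⟩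
    exact fun h => h1 (eq_one_of_inv_eq_self_of_odd_card hG h.symm)
  have hone : (1 : G) ∈ ({g : G | g ≤ g⁻¹} : Finset G) := by simp
  have hcard_erase := card_erase_add_one hone
  rw [hswap, herase] at hsplit
  omega

theorem exists_finset_two_mul_card_eq_of_odd_card (hG : Odd (Fintype.card G)) :
    ∃ S : Finset G, 2 * #S = Fintype.card G + 1 ∧ ∀ u ∈ S, ∀ v ∈ S, u * v = 1 → u = v := by
  classical
  let _ : LinearOrder G := LinearOrder.lift' _ (Fintype.equivFin G).injective
  refine ⟨({g : G | g ≤ g⁻¹} : Finset G), two_mul_card_filter_le_inv hG, fun u hu v hv => ?_⟩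
  simp only [mem_filter, mem_univ, true_and] at hu hv
  exact eq_of_mul_eq_one_of_le_inv hu hv

end OddOrder

theorem exists_good_subset_even (q : ℕ) (F : Type*) [Field F] [Fintype F]
    (hcard : Fintype.card F = q) (hq : Even q) :
    ∃ S : Finset F, (∀ i ∈ S, i ≠ 0) ∧ S.card = q / 2 ∧
      ∀ i ∈ S, ∀ j ∈ S, i ≠ j → i * j ≠ 1 := by
  classical
  have hq1 : 1 < q := hcard ▸ Fintype.one_lt_card
  have hunits : Fintype.card Fˣ = q - 1 := by rw [Fintype.card_units, hcard]
  have hodd : Odd (Fintype.card Fˣ) := hunits ▸ Nat.Even.sub_odd hq1.le hq odd_one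
  obtain ⟨S, hS, hinv⟩ := exists_finset_two_mul_card_eq_of_odd_card hodd
  refine ⟨S.map ⟨_, Units.val_injective⟩, ?_, ?_, ?_⟩
  · simp
  · rw [card_map]
    obtain ⟨k, rfl⟩ := hq
    omega
  · simp only [mem_map, Function.Embedding.coeFn_mk]
    rintro _ ⟨u, hu, rfl⟩ _ ⟨v, hv, rfl⟩ hne huv
    exact hne (congrArg _ (hinv u hu v hv (Units.ext huv)))
end

section
/- Let $q$ be an odd prime power and $\mathbb{F}$ the field of order $q$. There exists a subset $S \subseteq \mathbb{F}^\times$ with $|S| = (q-1)/2$ or $|S| \geq \lfloor q/2 \rfloor$ such that for all distinct $i, j \in S$: $i + j \neq 0$ and $ij \neq -1$. Precisely: there exists such $S$ with $2|S| \geq q - 1$. -/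
/-!
Let `φ(x) = x + x⁻¹`, or `φ(x) = x` where `x + x⁻¹ = 0`. Then `φ` is odd, nonzero on `𝔽ˣ`, and
`φ(x⁻¹) = φ(x)` whenever `x² ≠ -1`. Pick one element out of each pair `{y, -y}` of `𝔽ˣ` and let `S`
be the set of `x ≠ 0` with `φ(x)` picked. Then `S` contains exactly one of `x, -x`, so `|S| = (q-1)/2`;
if `i, j ∈ S` and `ij = -1` then `j = -i⁻¹` and `φ(j) = -φ(i)` is not picked, unless `i² = -1`, in
which case `j = i`.
-/

theorem Function.Involutive.exists_pred_iff_not {α : Type*} {σ : α → α} (hσ : σ.Involutive) :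
    ∃ P : α → Prop, ∀ a, σ a ≠ a → (P (σ a) ↔ ¬P a) := by
  let := IsWellOrder.linearOrder (WellOrderingRel (α := α))
  refine ⟨fun a => a < σ a, fun a ha => ?_⟩
  simp only [hσ a]
  exact (not_lt.trans ha.le_iff_lt).symm

theorem Finset.two_mul_card_filter_of_iff_not {α : Type*} {s : Finset α} {σ : α → α}
    (hσ : σ.Involutive) (hs : Set.MapsTo σ s s) (Q : α → Prop) [DecidablePred Q]
    (hQ : ∀ a ∈ s, Q (σ a) ↔ ¬Q a) : 2 * (s.filter Q).card = s.card := by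
  have hcard : (s.filter (¬Q ·)).card = (s.filter Q).card := by
    refine Finset.card_nbij' σ σ ?_ ?_ (fun a _ => hσ a) (fun a _ => hσ a) <;>
      intro a ha <;> simp only [Finset.coe_filter, Set.mem_ofPred_eq] at ha ⊢
    · exact ⟨hs ha.1, (hQ a ha.1).2 ha.2⟩
    · exact ⟨hs ha.1, fun h => (hQ a ha.1).1 h ha.2⟩
  rw [← Finset.card_filter_add_card_filter_not (s := s) Q, hcard, two_mul]

theorem neg_ne_self_of_two_ne_zero {R : Type*} [Ring R] [NoZeroDivisors R] (h2 : (2 : R) ≠ 0)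
    {x : R} (hx : x ≠ 0) : -x ≠ x := by
  intro h
  have h2x : (2 : R) * x = 0 := by rw [two_mul]; nth_rw 1 [← h]; exact neg_add_cancel x
  exact hx ((mul_eq_zero.mp h2x).resolve_left h2)

theorem exists_pred_neg_iff_not {R : Type*} [Ring R] [NoZeroDivisors R] (h2 : (2 : R) ≠ 0) :
    ∃ P : R → Prop, ∀ y ≠ 0, P (-y) ↔ ¬P y := by
  obtain ⟨P, hP⟩ := (neg_involutive (G := R)).exists_pred_iff_not
  exact ⟨P, fun y hy => hP y (neg_ne_self_of_two_ne_zero h2 hy)⟩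

section addInvOrSelf

variable {K : Type*} [DivisionRing K]

open Classical in
noncomputable def addInvOrSelf (x : K) : K := if x + x⁻¹ = 0 then x else x + x⁻¹

theorem addInvOrSelf_neg (x : K) : addInvOrSelf (-x) = -addInvOrSelf x := by
  have : -x + (-x)⁻¹ = -(x + x⁻¹) := by rw [inv_neg, neg_add]
  unfold addInvOrSelf
  rw [this, neg_eq_zero]
  split_ifs <;> rfl

theorem addInvOrSelf_ne_zero {x : K} (hx : x ≠ 0) : addInvOrSelf x ≠ 0 := by
  unfold addInvOrSelf
  split_ifs with h
  · exact hx
  · exact h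

theorem addInvOrSelf_inv {x : K} (h : x + x⁻¹ ≠ 0) : addInvOrSelf x⁻¹ = addInvOrSelf x := by
  have : x⁻¹ + x⁻¹⁻¹ = x + x⁻¹ := by rw [inv_inv, add_comm]
  unfold addInvOrSelf
  rw [this, if_neg h, if_neg h]

theorem add_ne_zero_and_mul_ne_neg_one {P : K → Prop} (hP : ∀ y ≠ 0, P (-y) ↔ ¬P y) {i j : K}
    (hi : i ≠ 0) (hPi : P (addInvOrSelf i)) (hPj : P (addInvOrSelf j)) (hij : i ≠ j) :
    i + j ≠ 0 ∧ i * j ≠ -1 := by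
  have hPi_neg : ¬P (-addInvOrSelf i) := fun h => (hP _ (addInvOrSelf_ne_zero hi)).1 h hPi
  constructor
  · intro h
    rw [eq_neg_of_add_eq_zero_right h, addInvOrSelf_neg] at hPj
    exact hPi_neg hPj
  · intro h
    have hj : j = -i⁻¹ := by rw [← inv_mul_cancel_left₀ hi j, h, mul_neg_one]
    by_cases ht : i + i⁻¹ = 0
    · rw [eq_neg_of_add_eq_zero_right ht, neg_neg] at hj
      exact hij hj.symm
    · rw [hj, addInvOrSelf_neg, addInvOrSelf_inv ht] at hPj
      exact hPi_neg hPj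

end addInvOrSelf

theorem exists_good_subset_odd (q : ℕ) (F : Type*) [Field F] [Fintype F]
    (hcard : Fintype.card F = q) (hq : Odd q) :
    ∃ S : Finset F, (∀ i ∈ S, i ≠ 0) ∧ 2 * S.card ≥ q - 1 ∧
      ∀ i ∈ S, ∀ j ∈ S, i ≠ j → i + j ≠ 0 ∧ i * j ≠ -1 := by
  classical
  have hchar : ringChar F ≠ 2 := fun h => by
    have hcard_even := FiniteField.even_card_iff_char_two.mp h
    rw [hcard] at hcard_even
    exact Nat.not_even_iff_odd.2 hq (Nat.even_iff.2 hcard_even)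
  obtain ⟨P, hP⟩ := exists_pred_neg_iff_not (Ring.two_ne_zero hchar)
  set U : Finset F := Finset.univ.erase 0 with hU
  have hmaps : Set.MapsTo Neg.neg (U : Set F) U := fun x hx => by simpa [hU] using hx
  have hQ : ∀ x ∈ U, P (addInvOrSelf (-x)) ↔ ¬P (addInvOrSelf x) := fun x hx =>
    addInvOrSelf_neg x ▸ hP _ (addInvOrSelf_ne_zero (Finset.ne_of_mem_erase hx))
  refine ⟨U.filter (fun x => P (addInvOrSelf x)),
    fun i hi => Finset.ne_of_mem_erase (Finset.mem_of_mem_filter i hi), ?_, fun i hi j hj hij => ?_⟩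
  · rw [Finset.two_mul_card_filter_of_iff_not neg_involutive hmaps _ hQ,
      Finset.card_erase_of_mem (Finset.mem_univ 0), Finset.card_univ, hcard]
  · simp only [hU, Finset.mem_filter, Finset.mem_erase] at hi hj
    exact add_ne_zero_and_mul_ne_neg_one hP hi.1.1 hi.2 hj.2 hij
end
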